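/- (Theorem 2, evader side.) Let s be a state with D(s)=d<∞ and let ν* be any DP asynchronous evader policy. Then every asynchronous play from s in which the evader's move at each step equals ν* applied to the current state and the pursuers' chosen move satisfies f(s^t)=0 for all t<d — i.e., ν* avoids being captured in fewer than d steps by every (possibly history-dependent) pursuer strategy. -/

import Mathlib

open scoped ENat

/-- Closed neighborhood `N[v]`: stay at `v` or cross one edge of `G`. -/
def closedNbr {V : Type*} (G : SimpleGraph V) (v : V) : Set V :=
  {u | u = v ∨ G.Adj v u}

/-- Joint pursuer moves: all `m` pursuers move simultaneously, each within a
closed neighborhood. -/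
def jointNbr {V : Type*} (G : SimpleGraph V) {m : ℕ} (sp : Fin m → V) :
    Set (Fin m → V) :=
  {np | ∀ i, np i ∈ closedNbr G (sp i)}

/-- Capture sets `C_k`: `C_0 = {s | f s = 1}` and
`C_{k+1} = C_k ∪ {(s_p,s_e) | ∃ n_p ∈ N[s_p], ∀ n_e ∈ N[s_e], (n_p,n_e) ∈ C_k}`. -/
def captureSet {V : Type*} (G : SimpleGraph V) {m : ℕ}
    (f : (Fin m → V) × V → Bool) : ℕ → Set ((Fin m → V) × V)
  | 0 => {s | f s = true}
  | k + 1 => captureSet G f k ∪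
      {s | ∃ np ∈ jointNbr G s.1, ∀ ne ∈ closedNbr G s.2, (np, ne) ∈ captureSet G f k}

/-- The distance table `D(s) = min {k | s ∈ C_k}` (and `∞` if `s` lies in no `C_k`). -/
noncomputable def Dtab {V : Type*} (G : SimpleGraph V) {m : ℕ}
    (f : (Fin m → V) × V → Bool) (s : (Fin m → V) × V) : ℕ∞ :=
  sInf {k : ℕ∞ | ∃ n : ℕ, k = n ∧ s ∈ captureSet G f n}

/-- A DP asynchronous evader policy: a stationary policy with
`ν*(s_p,s_e,n_p) ∈ argmax_{n_e ∈ N[s_e]} D(n_p,n_e)`. -/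
def IsDPEvaderAsync {V : Type*} (G : SimpleGraph V) {m : ℕ}
    (f : (Fin m → V) × V → Bool)
    (ν : (Fin m → V) × V → (Fin m → V) → V) : Prop :=
  ∀ (s : (Fin m → V) × V) (np : Fin m → V), ν s np ∈ closedNbr G s.2 ∧
    ∀ ne ∈ closedNbr G s.2, Dtab G f (np, ne) ≤ Dtab G f (np, ν s np)

/-!
`D` is a potential for the play: it is `0` on captured states, and against the DP evader it
drops by at most one per step, since the pursuers' move `n_p` together with every evader
reply lies in `C_k` for `k = D(n_p, ν* s n_p)`, which puts `s` in `C_{k+1}`. Starting from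
`D(s) = d`, the potential therefore stays positive, and the play uncaptured, for `t < d`.
-/

theorem ENat.ne_zero_of_lt_of_le_succ_add_one {Φ : ℕ → ℕ∞}
    (hΦ : ∀ t, Φ t ≠ 0 → Φ t ≤ Φ (t + 1) + 1) {t : ℕ} (ht : (t : ℕ∞) < Φ 0) : Φ t ≠ 0 := by
  have ne_zero_of_le {t : ℕ} (ht : (t : ℕ∞) < Φ 0) (hle : Φ 0 ≤ Φ t + t) : Φ t ≠ 0 := by
    rintro hzero
    rw [hzero, zero_add] at hle
    exact hle.not_gt ht
  suffices invariant : ∀ t : ℕ, (t : ℕ∞) < Φ 0 → Φ 0 ≤ Φ t + t from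
    ne_zero_of_le ht (invariant t ht)
  intro t
  induction t with
  | zero => simp
  | succ t ih =>
    intro ht
    have ht' : (t : ℕ∞) < Φ 0 := lt_of_le_of_lt (by simp) ht
    have hle := ih ht'
    calc Φ 0 ≤ Φ t + t := hle
      _ ≤ Φ (t + 1) + 1 + t := by gcongr; exact hΦ t (ne_zero_of_le ht' hle)
      _ = Φ (t + 1) + ↑(t + 1) := by push_cast; ring

section

variable {V : Type*} (G : SimpleGraph V) {m : ℕ} (f : (Fin m → V) × V → Bool)

theorem captureSet_mono : Monotone (captureSet G f) :=
  monotone_nat_of_le_succ fun _ => Set.subset_union_left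

variable {G f}

theorem Dtab_le_iff {s : (Fin m → V) × V} {k : ℕ} :
    Dtab G f s ≤ k ↔ s ∈ captureSet G f k := by
  refine ⟨fun h => ?_, fun h => sInf_le ⟨k, rfl, h⟩⟩
  have hne : {k : ℕ∞ | ∃ n : ℕ, k = n ∧ s ∈ captureSet G f n}.Nonempty := by
    rw [Set.nonempty_iff_ne_empty]
    rintro hempty
    rw [Dtab, hempty, sInf_empty] at h
    exact ENat.natCast_ne_top k (top_le_iff.mp h)
  obtain ⟨n, hn, hs⟩ := csInf_mem hne
  rw [Dtab, hn, Nat.cast_le] at h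
  exact captureSet_mono G f h hs

theorem Dtab_eq_zero_of_captured {s : (Fin m → V) × V} (h : f s = true) : Dtab G f s = 0 :=
  nonpos_iff_eq_zero.mp (Dtab_le_iff (k := 0) |>.mpr h)

theorem not_captured_of_Dtab_ne_zero {s : (Fin m → V) × V} (h : Dtab G f s ≠ 0) :
    f s = false :=
  Bool.eq_false_iff.mpr fun hf => h (Dtab_eq_zero_of_captured hf)

theorem Dtab_le_Dtab_dpEvader_add_one {ν : (Fin m → V) × V → (Fin m → V) → V}
    (hν : IsDPEvaderAsync G f ν) (s : (Fin m → V) × V) {np : Fin m → V}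
    (hnp : np ∈ jointNbr G s.1) : Dtab G f s ≤ Dtab G f (np, ν s np) + 1 := by
  induction h : Dtab G f (np, ν s np) using ENat.recTopCoe with
  | top => simp
  | coe k =>
    have reply_mem : ∀ ne ∈ closedNbr G s.2, (np, ne) ∈ captureSet G f k := fun ne hne =>
      Dtab_le_iff.mp (h ▸ (hν s np).2 ne hne)
    exact_mod_cast Dtab_le_iff.mpr (Or.inr ⟨np, hnp, reply_mem⟩ : s ∈ captureSet G f (k + 1))

end

theorem dp_evader_avoids_capture_before_D_general {V : Type*} (G : SimpleGraph V)
    (m : ℕ) (f : (Fin m → V) × V → Bool)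
    (ν : (Fin m → V) × V → (Fin m → V) → V) (hν : IsDPEvaderAsync G f ν)
    (s : (Fin m → V) × V) (d : ℕ) (hd : Dtab G f s = (d : ℕ∞))
    (σ : ℕ → (Fin m → V) × V) (h0 : σ 0 = s)
    (hplay : ∀ t, f (σ t) = false →
      (σ (t + 1)).1 ∈ jointNbr G (σ t).1 ∧ (σ (t + 1)).2 = ν (σ t) ((σ (t + 1)).1)) :
    ∀ t < d, f (σ t) = false := by
  have potential_step (t : ℕ) (ht : Dtab G f (σ t) ≠ 0) :
      Dtab G f (σ t) ≤ Dtab G f (σ (t + 1)) + 1 := by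
    obtain ⟨hnp, hne⟩ := hplay t (not_captured_of_Dtab_ne_zero ht)
    rw [show σ (t + 1) = ((σ (t + 1)).1, ν (σ t) (σ (t + 1)).1) from Prod.ext rfl hne]
    exact Dtab_le_Dtab_dpEvader_add_one hν (σ t) hnp
  intro t ht
  refine not_captured_of_Dtab_ne_zero
    (ENat.ne_zero_of_lt_of_le_succ_add_one (Φ := fun t => Dtab G f (σ t)) potential_step ?_)
  rwa [h0, hd, Nat.cast_lt]

/-- **Theorem 2 (evader side).** If `D(s) = d < ∞` and `ν*` is any DP asynchronous
evader policy, then every asynchronous play from `s` in which the evader's move at each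
step equals `ν*` applied to the current state and the pursuers' chosen move (the
pursuers moving arbitrarily) satisfies `f(s^t) = 0` for all `t < d`. -/
theorem dp_evader_avoids_capture_before_D {V : Type*} [Fintype V] (G : SimpleGraph V)
    (m : ℕ) (hm : 1 ≤ m) (f : (Fin m → V) × V → Bool)
    (ν : (Fin m → V) × V → (Fin m → V) → V) (hν : IsDPEvaderAsync G f ν)
    (s : (Fin m → V) × V) (d : ℕ) (hd : Dtab G f s = (d : ℕ∞))
    (σ : ℕ → (Fin m → V) × V) (h0 : σ 0 = s)
    (hplay : ∀ t, f (σ t) = false →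
      (σ (t + 1)).1 ∈ jointNbr G (σ t).1 ∧ (σ (t + 1)).2 = ν (σ t) ((σ (t + 1)).1)) :
    ∀ t < d, f (σ t) = false :=
  dp_evader_avoids_capture_before_D_general G m f ν hν s d hd σ h0 hplay
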